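/- arXiv:1411.3780 — 2 statements merged into one kernel-verified Lean document; each statement's English description precedes it below -/
import Mathlib

section
/- For the polynomial W = x³ + xy⁴ + yz² (the singularity Q_{2,0}), the maximal diagonal symmetry group is cyclic of order 24, generated by γ = (e^{2πi/3}, e^{2πi·11/12}, e^{2πi/24}). That is, a triple (λ,μ,ν) of complex numbers satisfies W(λx, μy, νz) = W(x,y,z) — equivalently λ³ = 1, λμ⁴ = 1 and μν² = 1 — if and only if (λ,μ,ν) = (e^{2πim/3}, e^{2πi·11m/12}, e^{2πim/24}) for some integer m, and the group of such triples has exactly 24 elements. -/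
open MvPolynomial

/-- The polynomial x³ + xy⁴ + yz² (the singularity Q_{2,0}). -/
noncomputable def W13 : MvPolynomial (Fin 3) ℂ := MvPolynomial.X 0 ^ 3 + MvPolynomial.X 0 * MvPolynomial.X 1 ^ 4 + MvPolynomial.X 1 * MvPolynomial.X 2 ^ 2

/-- A diagonal rescaling `x ↦ λx, y ↦ μy, z ↦ νz` fixes `W13`. -/
def IsDiagSym13 (lam mu nu : ℂ) : Prop :=
  MvPolynomial.aeval (fun j => MvPolynomial.C (![lam, mu, nu] j) * MvPolynomial.X j) W13 = W13

/-- The symmetry condition is equivalent to the three scalar equations. -/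
lemma diag_iff13 (lam mu nu : ℂ) :
    IsDiagSym13 lam mu nu ↔ (lam ^ 3 = 1 ∧ lam * mu ^ 4 = 1 ∧ mu * nu ^ 2 = 1) := by
  unfold IsDiagSym13 W13
  simp only [map_add, map_mul, map_pow, aeval_X, Matrix.cons_val_zero, Matrix.cons_val_one,
    Matrix.head_cons, Matrix.cons_val_two, Matrix.tail_cons]
  constructor
  · intro h
    have E : ∀ x y z : ℂ, lam^3*x^3 + lam*mu^4*(x*y^4) + mu*nu^2*(y*z^2) = x^3 + x*y^4 + y*z^2 := by
      intro x y z
      have := congrArg (eval ![x, y, z]) h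
      simp only [eval_add, eval_mul, eval_pow, eval_C, eval_X, Matrix.cons_val_zero,
        Matrix.cons_val_one, Matrix.head_cons, Matrix.cons_val_two, Matrix.tail_cons] at this
      linear_combination this
    have h1 : lam ^ 3 = 1 := by linear_combination E 1 0 0
    have h2 : lam * mu ^ 4 = 1 := by linear_combination E 1 1 0 - h1
    have h3 : mu * nu ^ 2 = 1 := by linear_combination E 0 1 1
    exact ⟨h1, h2, h3⟩
  · rintro ⟨h1, h2, h3⟩
    have c1 : (C lam : MvPolynomial (Fin 3) ℂ) ^ 3 = 1 := by rw [← map_pow, h1, map_one]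
    have c2 : (C lam : MvPolynomial (Fin 3) ℂ) * C mu ^ 4 = 1 := by
      rw [← map_pow, ← map_mul, h2, map_one]
    have c3 : (C mu : MvPolynomial (Fin 3) ℂ) * C nu ^ 2 = 1 := by
      rw [← map_pow, ← map_mul, h3, map_one]
    linear_combination (X 0 : MvPolynomial (Fin 3) ℂ) ^ 3 * c1 + (X 0 * X 1 ^ 4) * c2
      + (X 1 * X 2 ^ 2) * c3

/-- From the scalar equations we can solve everything in terms of `nu`. -/
lemma key13 (lam mu nu : ℂ) (h1 : lam ^ 3 = 1) (h2 : lam * mu ^ 4 = 1)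
    (h3 : mu * nu ^ 2 = 1) : nu ^ 24 = 1 ∧ mu = nu ^ 22 ∧ lam = nu ^ 8 := by
  have hm12 : mu ^ 12 = 1 := by
    linear_combination (lam ^ 2 * mu ^ 8 + lam * mu ^ 4 + 1) * h2 - mu ^ 12 * h1
  have hn24 : nu ^ 24 = 1 := by
    have h4 : mu ^ 12 * nu ^ 24 = 1 := by
      have := congrArg (· ^ 12) h3
      simpa [mul_pow, ← pow_mul] using this
    rw [hm12, one_mul] at h4; exact h4
  have h5 : mu ^ 4 * nu ^ 8 = 1 := by
    have := congrArg (· ^ 4) h3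
    simpa [mul_pow, ← pow_mul] using this
  exact ⟨hn24, by linear_combination nu ^ 22 * h3 - mu * hn24,
    by linear_combination nu ^ 8 * h2 - lam * h5⟩

/-- For `W = x³ + xy⁴ + yz²` (Q_{2,0}), the maximal diagonal symmetry group is cyclic of order 24, generated by `γ = (e^{2πi/3}, e^{2πi·11/12}, e^{2πi/24})`. -/
theorem max_symmetry_group_13 :
    (∀ lam mu nu : ℂ, IsDiagSym13 lam mu nu ↔ (lam ^ 3 = 1 ∧ lam * mu ^ 4 = 1 ∧ mu * nu ^ 2 = 1))
    ∧ (∀ lam mu nu : ℂ, IsDiagSym13 lam mu nu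
        ↔ ∃ m : ℤ, lam = Complex.exp (2 * (Real.pi : ℂ) * Complex.I * ((m : ℂ) / 3))
            ∧ mu = Complex.exp (2 * (Real.pi : ℂ) * Complex.I * (11 * (m : ℂ) / 12))
            ∧ nu = Complex.exp (2 * (Real.pi : ℂ) * Complex.I * ((m : ℂ) / 24)))
    ∧ Nat.card {p : ℂ × ℂ × ℂ // IsDiagSym13 p.1 p.2.1 p.2.2} = 24 := by
  refine ⟨diag_iff13, ?_, ?_⟩
  · intro lam mu nu
    rw [diag_iff13]
    constructor
    · rintro ⟨h1, h2, h3⟩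
      obtain ⟨hn24, hmu, hlam⟩ := key13 lam mu nu h1 h2 h3
      obtain ⟨i, -, hi⟩ :=
        (Complex.isPrimitiveRoot_exp 24 (by norm_num)).eq_pow_of_pow_eq_one hn24
      have hnu : nu = Complex.exp (2 * (Real.pi : ℂ) * Complex.I * ((i : ℂ) / 24)) := by
        rw [← hi, ← Complex.exp_nat_mul]; push_cast; ring_nf
      refine ⟨i, ?_, ?_, by rw [hnu]; push_cast; ring_nf⟩
      · rw [hlam, hnu, ← Complex.exp_nat_mul]; push_cast; ring_nf
      · rw [hmu, hnu, ← Complex.exp_nat_mul]; push_cast; ring_nf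
    · rintro ⟨m, rfl, rfl, rfl⟩
      refine ⟨?_, ?_, ?_⟩
      · rw [← Complex.exp_nat_mul, show (3:ℕ) * (2 * (Real.pi : ℂ) * Complex.I * ((m : ℂ) / 3))
          = m * (2 * Real.pi * Complex.I) by push_cast; ring,
          Complex.exp_int_mul_two_pi_mul_I]
      · rw [← Complex.exp_nat_mul, ← Complex.exp_add,
          show 2 * (Real.pi : ℂ) * Complex.I * ((m : ℂ) / 3) + (4:ℕ) *
            (2 * (Real.pi : ℂ) * Complex.I * (11 * (m : ℂ) / 12))
            = ((4 * m : ℤ) : ℂ) * (2 * Real.pi * Complex.I) by push_cast; ring,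
          Complex.exp_int_mul_two_pi_mul_I]
      · rw [← Complex.exp_nat_mul, ← Complex.exp_add,
          show 2 * (Real.pi : ℂ) * Complex.I * (11 * (m : ℂ) / 12) + (2:ℕ) *
            (2 * (Real.pi : ℂ) * Complex.I * ((m : ℂ) / 24))
            = m * (2 * Real.pi * Complex.I) by push_cast; ring,
          Complex.exp_int_mul_two_pi_mul_I]
  · have e : {p : ℂ × ℂ × ℂ // IsDiagSym13 p.1 p.2.1 p.2.2} ≃ {v : ℂ // v ^ 24 = 1} :=
      { toFun := fun p => ⟨p.1.2.2, by
          obtain ⟨h1, h2, h3⟩ := (diag_iff13 p.1.1 p.1.2.1 p.1.2.2).mp p.2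
          exact (key13 _ _ _ h1 h2 h3).1⟩
        invFun := fun v => ⟨(v.1 ^ 8, v.1 ^ 22, v.1), (diag_iff13 _ _ _).mpr
          ⟨by linear_combination v.2,
           by linear_combination (v.1 ^ 72 + v.1 ^ 48 + v.1 ^ 24 + 1) * v.2,
           by linear_combination v.2⟩⟩
        left_inv := fun p => by
          obtain ⟨h1, h2, h3⟩ := (diag_iff13 p.1.1 p.1.2.1 p.1.2.2).mp p.2
          obtain ⟨-, hmu, hlam⟩ := key13 _ _ _ h1 h2 h3
          ext <;> simp [← hmu, ← hlam]
        right_inv := fun v => rfl }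
    rw [Nat.card_congr e]
    have e2 : {v : ℂ // v ^ 24 = 1} ≃ (Polynomial.nthRootsFinset 24 (1 : ℂ) : Finset ℂ) :=
      Equiv.subtypeEquivRight fun v => (Polynomial.mem_nthRootsFinset (by norm_num) (1 : ℂ)).symm
    rw [Nat.card_congr e2, Nat.card_eq_finsetCard,
      (Complex.isPrimitiveRoot_exp 24 (by norm_num)).card_nthRootsFinset]
end

section
/- For the polynomial W = x³y + y⁹ (the singularity Z_{19}), the maximal diagonal symmetry group is cyclic of order 27, generated by the exponential of the weight vector, J = (e^{2πi·8/27}, e^{2πi/9}). That is, a pair (λ,μ) of complex numbers satisfies W(λx, μy) = W(x,y) — equivalently λ³μ = 1 and μ⁹ = 1 — if and only if (λ,μ) = (e^{2πi·8m/27}, e^{2πim/9}) for some integer m, and the group of such pairs has exactly 27 elements. In particular the maximal symmetry group equals its minimal admissible subgroup ⟨J⟩. -/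
open MvPolynomial

/-- The polynomial x³y + y⁹ (the singularity Z_{19}). -/
noncomputable def W17 : MvPolynomial (Fin 2) ℂ := MvPolynomial.X 0 ^ 3 * MvPolynomial.X 1 + MvPolynomial.X 1 ^ 9

/-- A diagonal rescaling `x ↦ λx, y ↦ μy` fixes `W17`. -/
def IsDiagSym17 (lam mu : ℂ) : Prop :=
  MvPolynomial.aeval (fun j => MvPolynomial.C (![lam, mu] j) * MvPolynomial.X j) W17 = W17

lemma isDiagSym17_iff (lam mu : ℂ) : IsDiagSym17 lam mu ↔ (lam ^ 3 * mu = 1 ∧ mu ^ 9 = 1) := by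
  constructor
  · intro h
    unfold IsDiagSym17 W17 at h
    have h1 := congrArg (MvPolynomial.eval ![(1:ℂ), 1]) h
    have h2 := congrArg (MvPolynomial.eval ![(2:ℂ), 1]) h
    simp [map_add, map_mul, map_pow, aeval_X, eval_X] at h1 h2
    refine ⟨by linear_combination (h2 - h1)/7, by linear_combination (8*h1 - h2)/7⟩
  · rintro ⟨h1, h2⟩
    unfold IsDiagSym17 W17
    simp only [map_add, map_mul, map_pow, aeval_X, Matrix.cons_val_zero, Matrix.cons_val_one,
      Matrix.head_cons]
    have e : (C lam * X 0 : MvPolynomial (Fin 2) ℂ) ^ 3 * (C mu * X 1) + (C mu * X 1) ^ 9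
        = C (lam ^ 3 * mu) * (X 0 ^ 3 * X 1) + C (mu ^ 9) * X 1 ^ 9 := by
      rw [mul_pow, mul_pow, ← C_pow, ← C_pow, map_mul]; ring
    rw [e, h1, h2]; simp

lemma exp_int_ratio (a b : ℂ) (n : ℤ) (h : a - b = n * (2 * Real.pi * Complex.I)) :
    Complex.exp a = Complex.exp b := by
  have ha : a = b + n * (2 * Real.pi * Complex.I) := by linear_combination h
  rw [ha, Complex.exp_add, Complex.exp_int_mul_two_pi_mul_I, mul_one]

lemma pow27_eq_one {lam mu : ℂ} (h1 : lam ^ 3 * mu = 1) (h2 : mu ^ 9 = 1) : lam ^ 27 = 1 := by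
  have e : lam ^ 27 * mu ^ 9 = (lam ^ 3 * mu) ^ 9 := by ring
  rw [h1, h2, mul_one, one_pow] at e; exact e

lemma mu_eq {lam mu : ℂ} (h1 : lam ^ 3 * mu = 1) (h2 : mu ^ 9 = 1) : mu = lam ^ 24 := by
  have h27 := pow27_eq_one h1 h2
  have hl : lam ^ 27 * mu = lam ^ 24 := by
    calc lam ^ 27 * mu = lam ^ 24 * (lam ^ 3 * mu) := by ring
      _ = lam ^ 24 := by rw [h1, mul_one]
  rw [h27, one_mul] at hl; exact hl

lemma param17 (lam mu : ℂ) : (lam ^ 3 * mu = 1 ∧ mu ^ 9 = 1) ↔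
    (∃ m : ℤ, lam = Complex.exp (2 * (Real.pi : ℂ) * Complex.I * (8 * (m : ℂ) / 27))
      ∧ mu = Complex.exp (2 * (Real.pi : ℂ) * Complex.I * ((m : ℂ) / 9))) := by
  constructor
  · rintro ⟨h1, h2⟩
    have h27 : lam ^ 27 = 1 := pow27_eq_one h1 h2
    have hprim := Complex.isPrimitiveRoot_exp 27 (by norm_num)
    obtain ⟨k, hk, hke⟩ := hprim.eq_pow_of_pow_eq_one h27
    refine ⟨17 * k, ?_, ?_⟩
    · rw [← hke, ← Complex.exp_nat_mul]
      apply exp_int_ratio _ _ (-(5 * k))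
      push_cast; ring
    · have hmu : mu = lam ^ 24 := mu_eq h1 h2
      rw [hmu, ← hke, ← pow_mul, ← Complex.exp_nat_mul]
      apply exp_int_ratio _ _ (-(k:ℤ))
      push_cast; ring
  · rintro ⟨m, rfl, rfl⟩
    rw [← Complex.exp_nat_mul, ← Complex.exp_nat_mul, ← Complex.exp_add]
    constructor
    · rw [show ((3:ℕ):ℂ) * (2 * (Real.pi:ℂ) * Complex.I * (8 * (m:ℂ)/27)) + 2*(Real.pi:ℂ)*Complex.I*((m:ℂ)/9) = m * (2 * Real.pi * Complex.I) by push_cast; ring]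
      exact Complex.exp_int_mul_two_pi_mul_I m
    · rw [show ((9:ℕ):ℂ) * (2 * (Real.pi:ℂ) * Complex.I * ((m:ℂ)/9)) = m * (2 * Real.pi * Complex.I) by push_cast; ring]
      exact Complex.exp_int_mul_two_pi_mul_I m

/-- For `W = x³y + y⁹` (Z_{19}), the maximal diagonal symmetry group is cyclic of order 27, generated by `J = (e^{2πi·8/27}, e^{2πi/9})`; in particular `G_W^max = ⟨J⟩`. -/
theorem max_symmetry_group_17 :
    (∀ lam mu : ℂ, IsDiagSym17 lam mu ↔ (lam ^ 3 * mu = 1 ∧ mu ^ 9 = 1))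
    ∧ (∀ lam mu : ℂ, IsDiagSym17 lam mu
        ↔ ∃ m : ℤ, lam = Complex.exp (2 * (Real.pi : ℂ) * Complex.I * (8 * (m : ℂ) / 27))
            ∧ mu = Complex.exp (2 * (Real.pi : ℂ) * Complex.I * ((m : ℂ) / 9)))
    ∧ Nat.card {p : ℂ × ℂ // IsDiagSym17 p.1 p.2} = 27 := by
  refine ⟨isDiagSym17_iff, fun lam mu => (isDiagSym17_iff lam mu).trans (param17 lam mu), ?_⟩
  have hprim := Complex.isPrimitiveRoot_exp 27 (by norm_num : (27:ℕ) ≠ 0)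
  have e : {p : ℂ × ℂ // IsDiagSym17 p.1 p.2} ≃ (Polynomial.nthRootsFinset 27 (1:ℂ)) :=
    { toFun := fun p => ⟨p.1.1, by
        obtain ⟨h1, h2⟩ := (isDiagSym17_iff _ _).1 p.2
        exact (Polynomial.mem_nthRootsFinset (by norm_num) (1:ℂ)).2 (pow27_eq_one h1 h2)⟩
      invFun := fun x => ⟨(x.1, x.1 ^ 24), by
        have hx : (x : ℂ) ^ 27 = 1 := (Polynomial.mem_nthRootsFinset (by norm_num) (1:ℂ)).1 x.2
        refine (isDiagSym17_iff _ _).2 ⟨?_, ?_⟩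
        · rw [show (x:ℂ) ^ 3 * (x:ℂ) ^ 24 = (x:ℂ) ^ 27 by ring, hx]
        · rw [show ((x:ℂ) ^ 24) ^ 9 = ((x:ℂ) ^ 27) ^ 8 by ring, hx, one_pow]⟩
      left_inv := fun p => by
        obtain ⟨h1, h2⟩ := (isDiagSym17_iff _ _).1 p.2
        exact Subtype.ext (Prod.ext rfl (mu_eq h1 h2).symm)
      right_inv := fun x => Subtype.ext rfl }
  rw [Nat.card_congr e, Nat.card_eq_finsetCard, hprim.card_nthRootsFinset]
end
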